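/- Let Θ be an MLL proof net and A a formula occurrence in Θ. There exists a DR-switching S (a 'principal switching' for A) such that the vertex set of the component Θ_S^A equals the empire e_Θ(A); moreover a switching S has this property iff it satisfies: (1) if A is a premise of a ⅋-link, S selects A in that link, and (2) for any ⅋-link with one premise in e_Θ(A) and the other not, S selects the premise outside e_Θ(A). -/

import Mathlib

/-- An MLL link: an ID-link (axiom link) with two conclusions,
a tensor link or a par link with two premises and one conclusion. -/
inductive MLLLink (V : Type) where
  | idl (c₁ c₂ : V)
  | tensor (a b c : V)
  | par (a b c : V)
deriving DecidableEq

namespace MLLLink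
variable {V V' : Type}

def prems : MLLLink V → List V
  | idl _ _ => []
  | tensor a b _ => [a, b]
  | par a b _ => [a, b]

def concls : MLLLink V → List V
  | idl c₁ c₂ => [c₁, c₂]
  | tensor _ _ c => [c]
  | par _ _ c => [c]

def isId : MLLLink V → Bool
  | idl _ _ => true
  | _ => false

def isTensor : MLLLink V → Bool
  | tensor _ _ _ => true
  | _ => false

def isPar : MLLLink V → Bool
  | par _ _ _ => true
  | _ => false

/-- Relabel the vertices of a link along a map. -/
def map (f : V → V') : MLLLink V → MLLLink V'
  | idl c₁ c₂ => idl (f c₁) (f c₂)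
  | tensor a b c => tensor (f a) (f b) (f c)
  | par a b c => par (f a) (f b) (f c)

/-- Forget whether a multiplicative link is ⊗ or ⅋ (normalizing ⅋ to ⊗). -/
def forget : MLLLink V → MLLLink V
  | par a b c => tensor a b c
  | L => L

end MLLLink

/-- An MLL proof structure on the set `V` of formula occurrences:
every occurrence is the conclusion of exactly one link and the premise of
at most one link, and the occurrences appearing in a link are distinct. -/
structure MLLProofStructure (V : Type) [DecidableEq V] where
  links : Finset (MLLLink V)
  concl_exists : ∀ v : V, ∃ L ∈ links, v ∈ L.concls
  concl_unique : ∀ v : V, ∀ L ∈ links, ∀ L' ∈ links,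
      v ∈ L.concls → v ∈ L'.concls → L = L'
  prem_unique : ∀ v : V, ∀ L ∈ links, ∀ L' ∈ links,
      v ∈ L.prems → v ∈ L'.prems → L = L'
  nodup : ∀ L ∈ links, (L.prems ++ L.concls).Nodup

variable {V : Type} [DecidableEq V]

/-- The edge generated by a link under a DR-switching `S`
(`S L = true` selects the left premise of a ⅋-link). -/
def switchEdge (S : MLLLink V → Bool) (L : MLLLink V) (v w : V) : Prop :=
  match L with
  | .idl c₁ c₂ => v = c₁ ∧ w = c₂
  | .tensor a b c => (v = a ∧ w = c) ∨ (v = b ∧ w = c)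
  | .par a b c =>
      (S (.par a b c) = true ∧ v = a ∧ w = c) ∨
      (S (.par a b c) = false ∧ v = b ∧ w = c)

def drRel (Θ : MLLProofStructure V) (S : MLLLink V → Bool) (v w : V) : Prop :=
  ∃ L ∈ Θ.links, switchEdge S L v w

/-- The Danos–Regnier graph of a proof structure under a switching. -/
def drGraph (Θ : MLLProofStructure V) (S : MLLLink V → Bool) : SimpleGraph V :=
  SimpleGraph.fromRel (drRel Θ S)

/-- Danos–Regnier criterion: a proof net is a proof structure all of whose
DR-graphs are acyclic and connected. -/
def IsProofNet (Θ : MLLProofStructure V) : Prop :=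
  ∀ S : MLLLink V → Bool, (drGraph Θ S).IsAcyclic ∧ (drGraph Θ S).Connected

/-- The edges from `A` down to the conclusion of the link of which `A` is a premise. -/
def belowEdges (Θ : MLLProofStructure V) (A : V) : Set (Sym2 V) :=
  {e | ∃ L ∈ Θ.links, A ∈ L.prems ∧ ∃ c ∈ L.concls, e = s(A, c)}

/-- The DR-graph with the edge below `A` deleted. -/
def empGraph (Θ : MLLProofStructure V) (S : MLLLink V → Bool) (A : V) : SimpleGraph V :=
  (drGraph Θ S).deleteEdges (belowEdges Θ A)

/-- The vertex set of `Θ_S^A`: the connected component of `A` in the DR-graph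
after deleting the edge below `A`. -/
def empComp (Θ : MLLProofStructure V) (S : MLLLink V → Bool) (A : V) : Set V :=
  {v | (empGraph Θ S A).Reachable A v}

/-- The empire of `A` in `Θ`. -/
def empire (Θ : MLLProofStructure V) (A : V) : Set V :=
  ⋂ S : MLLLink V → Bool, empComp Θ S A

/-- A conclusion of `Θ` is a formula occurrence which is a premise of no link. -/
def IsConclusion (Θ : MLLProofStructure V) (v : V) : Prop :=
  ∀ L ∈ Θ.links, v ∉ L.prems

/-- All premises and conclusions of a link lie in `X`. -/
def allIn (X : Set V) (L : MLLLink V) : Prop :=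
  (∀ w ∈ L.prems, w ∈ X) ∧ (∀ w ∈ L.concls, w ∈ X)

/-- `X` together with the links of `Θ` contained in `X` forms a proof structure. -/
def IsSubProofStructure (Θ : MLLProofStructure V) (X : Set V) : Prop :=
  ∀ v ∈ X, ∃ L ∈ Θ.links, v ∈ L.concls ∧ allIn X L

def subDrRel (Θ : MLLProofStructure V) (X : Set V) (S : MLLLink V → Bool)
    (v w : V) : Prop :=
  ∃ L ∈ Θ.links, allIn X L ∧ switchEdge S L v w

/-- The DR-graph of the substructure of `Θ` induced on `X`. -/
def subDrGraph (Θ : MLLProofStructure V) (X : Set V) (S : MLLLink V → Bool) :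
    SimpleGraph V :=
  SimpleGraph.fromRel (subDrRel Θ X S)

/-- `X` is a sub-proof net of `Θ`: it induces a proof structure whose
DR-graphs are all acyclic and connected (on `X`). -/
def IsSubProofNet (Θ : MLLProofStructure V) (X : Set V) : Prop :=
  IsSubProofStructure Θ X ∧
    ∀ S : MLLLink V → Bool, (subDrGraph Θ X S).IsAcyclic ∧
      ∀ v ∈ X, ∀ w ∈ X, (subDrGraph Θ X S).Reachable v w

/-- `A` is a conclusion of the substructure induced on `X`. -/
def IsConclusionOfSub (Θ : MLLProofStructure V) (X : Set V) (A : V) : Prop :=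
  A ∈ X ∧ ∀ L ∈ Θ.links, allIn X L → A ∉ L.prems

/-- `e` is an isomorphism of the underlying link graphs of `Θ₁` and `Θ₂`,
forgetting the ⊗/⅋ labels: they witness that `Θ₁` and `Θ₂` are in the same PS-family. -/
def FamilyIso {V₁ V₂ : Type} [DecidableEq V₁] [DecidableEq V₂]
    (Θ₁ : MLLProofStructure V₁) (Θ₂ : MLLProofStructure V₂) (e : V₁ ≃ V₂) : Prop :=
  Θ₁.links.image (fun L => (L.map e).forget) = Θ₂.links.image MLLLink.forget

/-- The number of (multiplicative) links at which the ⊗/⅋-labellings of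
`Θ₁` and `Θ₂` differ along `e`. -/
def diffCount {V₁ V₂ : Type} [DecidableEq V₁] [DecidableEq V₂]
    (Θ₁ : MLLProofStructure V₁) (Θ₂ : MLLProofStructure V₂) (e : V₁ ≃ V₂) : ℕ :=
  (Θ₁.links.filter (fun L => L.map e ∉ Θ₂.links)).card

/-- A principal switching for `A`: it selects `A` in any ⅋-link of which `A`
is a premise, and selects the premise outside `empire Θ A` in any ⅋-link with
exactly one premise in the empire (`S L = true` selects the left premise). -/
def IsPrincipal (Θ : MLLProofStructure V) (A : V) (S : MLLLink V → Bool) : Prop :=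
  (∀ a b c : V, MLLLink.par a b c ∈ Θ.links →
    (A = a → S (MLLLink.par a b c) = true) ∧ (A = b → S (MLLLink.par a b c) = false)) ∧
  (∀ a b c : V, MLLLink.par a b c ∈ Θ.links →
    (a ∈ empire Θ A ∧ b ∉ empire Θ A → S (MLLLink.par a b c) = false) ∧
    (b ∈ empire Θ A ∧ a ∉ empire Θ A → S (MLLLink.par a b c) = true))


/-!
Let `c` be the conclusion of the link below `A` (if there is none, every `Θ_S^A` is the whole net
and every switching is principal). In the tree `DR(S)` the edge `A — c` is either absent, and then
`Θ_S^A` is everything, or a bridge, and then `Θ_S^A` is the side of `A`; hence `c` is never in the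
empire. Switching a single ⅋-link trades one edge of a tree for another, which yields two closure
properties of the empire: the other premise of a ⅋-link with premise `A` is in it (after the trade
the tree must still join `A` to `c`), and so is every premise of a link whose conclusion is in it
(otherwise its path to `c` would survive the trade and join `A` to `c`). A principal switching
therefore never leaves the empire along an edge of `Θ_S^A`, while a non-principal one has such an
edge from the empire to `c` or to a vertex outside it.
-/

namespace SimpleGraph

variable {W : Type*} {G : SimpleGraph W}

theorem Reachable.deleteEdges_singleton_or {x y : W} (h : G.Reachable x y) (u v : W) :
    (G.deleteEdges {s(u, v)}).Reachable x y ∨ (G.deleteEdges {s(u, v)}).Reachable x u ∨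
      (G.deleteEdges {s(u, v)}).Reachable x v := by
  obtain ⟨p⟩ := h
  induction p with
  | nil => exact Or.inl .rfl
  | @cons x z y hxz _ ih =>
    by_cases he : s(x, z) = s(u, v)
    · rcases Sym2.eq_iff.1 he with ⟨rfl, -⟩ | ⟨rfl, -⟩
      exacts [Or.inr (Or.inl .rfl), Or.inr (Or.inr .rfl)]
    · have hxz' : (G.deleteEdges {s(u, v)}).Adj x z := (deleteEdges_adj ..).2 ⟨hxz, he⟩
      exact ih.imp hxz'.reachable.trans (Or.imp hxz'.reachable.trans hxz'.reachable.trans)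

theorem IsAcyclic.not_reachable_deleteEdges (hG : G.IsAcyclic) {u v : W} (h : G.Adj u v) :
    ¬ (G.deleteEdges {s(u, v)}).Reachable u v :=
  isAcyclic_iff_forall_adj_isBridge.1 hG h

end SimpleGraph

open SimpleGraph

section Links

variable {U : Type}

theorem MLLLink.exists_concls_eq_of_mem_prems {L : MLLLink U} {x : U} (hx : x ∈ L.prems) :
    ∃ c, L.concls = [c] := by
  cases L <;> simp_all [prems, concls]

theorem switchEdge_congr {S S' : MLLLink U → Bool} {L : MLLLink U}
    (h : L.isPar = true → S L = S' L) : switchEdge S L = switchEdge S' L := by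
  cases L <;> funext u w <;> simp_all [switchEdge, MLLLink.isPar]

theorem switchEdge_mem {S : MLLLink U → Bool} {L : MLLLink U} {u w : U}
    (h : switchEdge S L u w) : L = .idl u w ∨ u ∈ L.prems ∧ w ∈ L.concls := by
  cases L <;> simp only [switchEdge] at h <;> aesop (add simp [MLLLink.prems, MLLLink.concls])

theorem switchEdge_par_unique {S : MLLLink U → Bool} {a b c x u w : U}
    (hx : switchEdge S (.par a b c) x c) (h : switchEdge S (.par a b c) u w) : u = x ∧ w = c := by
  simp only [switchEdge] at hx h
  grind

theorem switchEdge_par_or {a b c x y : U} (hxy : x = a ∧ y = b ∨ x = b ∧ y = a)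
    (S : MLLLink U → Bool) : switchEdge S (.par a b c) x c ∨ switchEdge S (.par a b c) y c := by
  simp only [switchEdge]
  cases S (.par a b c) <;> grind

theorem switchEdge_or_par {L : MLLLink U} {x c : U} (hx : x ∈ L.prems) (hc : c ∈ L.concls)
    (S : MLLLink U → Bool) :
    switchEdge S L x c ∨
      ∃ a b y, L = .par a b c ∧ (x = a ∧ y = b ∨ x = b ∧ y = a) ∧ switchEdge S L y c := by
  cases L with
  | idl => simp [MLLLink.prems] at hx
  | tensor a b c' =>
    simp only [MLLLink.prems, MLLLink.concls, List.mem_cons, List.not_mem_nil, or_false] at hx hc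
    subst hc
    exact Or.inl (hx.imp (⟨·, rfl⟩) (⟨·, rfl⟩))
  | par a b c' =>
    simp only [MLLLink.prems, MLLLink.concls, List.mem_cons, List.not_mem_nil, or_false] at hx hc
    subst hc
    rcases hx with rfl | rfl
    · exact (switchEdge_par_or (Or.inl ⟨rfl, rfl⟩) S).imp_right
        (⟨_, _, _, rfl, Or.inl ⟨rfl, rfl⟩, ·⟩)
    · exact (switchEdge_par_or (Or.inr ⟨rfl, rfl⟩) S).imp_right
        (⟨_, _, _, rfl, Or.inr ⟨rfl, rfl⟩, ·⟩)

end Links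

section DRGraph

variable {Θ : MLLProofStructure V} {S S' : MLLLink V → Bool}

theorem exists_switchEdge_update {L : MLLLink V} {x c : V} (hx : x ∈ L.prems)
    (hc : c ∈ L.concls) (S : MLLLink V → Bool) :
    ∃ v, switchEdge (Function.update S L v) L x c := by
  cases L with
  | idl => simp [MLLLink.prems] at hx
  | tensor a b c' =>
    simp only [MLLLink.prems, MLLLink.concls, List.mem_cons, List.not_mem_nil, or_false] at hx hc
    exact ⟨true, by simp only [switchEdge]; tauto⟩
  | par a b c' =>
    simp only [MLLLink.prems, MLLLink.concls, List.mem_cons, List.not_mem_nil, or_false] at hx hc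
    rcases hx with rfl | rfl
    · exact ⟨true, Or.inl ⟨by simp, rfl, hc⟩⟩
    · exact ⟨false, Or.inr ⟨by simp, rfl, hc⟩⟩

theorem drGraph_adj_of_switchEdge {L : MLLLink V} (hL : L ∈ Θ.links) {x y : V} (hxy : x ≠ y)
    (h : switchEdge S L x y) : (drGraph Θ S).Adj x y :=
  (fromRel_adj ..).2 ⟨hxy, Or.inl ⟨L, hL, h⟩⟩

theorem drGraph_deleteEdges_le {P : MLLLink V} {x c : V} (hS : ∀ M ≠ P, S' M = S M)
    (hP : ∀ u w, switchEdge S' P u w → u = x ∧ w = c) :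
    (drGraph Θ S').deleteEdges {s(x, c)} ≤ drGraph Θ S := by
  have key : ∀ u w, drRel Θ S' u w → s(u, w) ≠ s(x, c) → drRel Θ S u w := by
    rintro u w ⟨M, hM, h⟩ he
    have hMP : M ≠ P := by
      rintro rfl
      obtain ⟨rfl, rfl⟩ := hP u w h
      exact he rfl
    exact ⟨M, hM, switchEdge_congr (fun _ => (hS M hMP).symm) ▸ h⟩
  intro u w huw
  obtain ⟨⟨hne, h | h⟩, he⟩ := (deleteEdges_adj ..).1 huw
  · exact (fromRel_adj ..).2 ⟨hne, Or.inl (key u w h fun h' => he (h' ▸ rfl))⟩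
  · exact (fromRel_adj ..).2 ⟨hne, Or.inr (key w u h fun h' => he (Sym2.eq_swap.trans h' ▸ rfl))⟩

end DRGraph

namespace MLLProofStructure

variable {Θ : MLLProofStructure V}

def Below (Θ : MLLProofStructure V) (L : MLLLink V) (x c : V) : Prop :=
  L ∈ Θ.links ∧ x ∈ L.prems ∧ c ∈ L.concls

theorem par_prems_ne {a b c x y : V} (hP : .par a b c ∈ Θ.links)
    (hxy : x = a ∧ y = b ∨ x = b ∧ y = a) : x ≠ y := by
  have := Θ.nodup _ hP
  simp only [MLLLink.prems, MLLLink.concls, List.cons_append, List.nodup_cons] at this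
  grind

theorem below_par {a b c x : V} (hP : .par a b c ∈ Θ.links) (hx : x = a ∨ x = b) :
    Θ.Below (.par a b c) x c :=
  ⟨hP, by simpa [MLLLink.prems] using hx, by simp [MLLLink.concls]⟩

namespace Below

variable {L L' LA : MLLLink V} {x c c' A cA v w : V} {S S' : MLLLink V → Bool}

theorem ne (h : Θ.Below L x c) : x ≠ c := by
  have := Θ.nodup L h.1
  rw [List.nodup_append] at this
  exact this.2.2 x h.2.1 c h.2.2

theorem unique (h : Θ.Below L x c) (h' : Θ.Below L' x c') : L = L' ∧ c = c' := by
  obtain rfl := Θ.prem_unique x L h.1 L' h'.1 h.2.1 h'.2.1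
  obtain ⟨d, hd⟩ := MLLLink.exists_concls_eq_of_mem_prems h.2.1
  have hc := h.2.2
  have hc' := h'.2.2
  simp_all

theorem switchEdge_or_below_of_adj (h : Θ.Below L x c)
    (hadj : (drGraph Θ S).Adj x c) : switchEdge S L x c ∨ ∃ M, Θ.Below M c x := by
  have hidl : ∀ {y z}, .idl y z ∈ Θ.links → c ∈ (MLLLink.idl y z).concls → False := by
    intro y z hM hc
    obtain rfl := Θ.concl_unique c _ hM L h.1 hc h.2.2
    simpa [MLLLink.prems] using h.2.1
  obtain ⟨-, ⟨M, hM, hsw⟩ | ⟨M, hM, hsw⟩⟩ := (fromRel_adj ..).1 hadj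
  · rcases switchEdge_mem hsw with rfl | ⟨hx, -⟩
    · exact (hidl hM (by simp [MLLLink.concls])).elim
    · obtain rfl := Θ.prem_unique x M hM L h.1 hx h.2.1
      exact Or.inl hsw
  · rcases switchEdge_mem hsw with rfl | ⟨hc, hx⟩
    · exact (hidl hM (by simp [MLLLink.concls])).elim
    · exact Or.inr ⟨M, hM, hc, hx⟩

theorem belowEdges_eq (hA : Θ.Below LA A cA) : belowEdges Θ A = {s(A, cA)} := by
  ext e
  constructor
  · rintro ⟨L, hL, hAL, c, hc, rfl⟩
    rw [(hA.unique ⟨hL, hAL, hc⟩).2]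
    rfl
  · rintro rfl
    exact ⟨LA, hA.1, hA.2.1, cA, hA.2.2, rfl⟩

theorem empGraph_eq (hA : Θ.Below LA A cA) (S : MLLLink V → Bool) :
    empGraph Θ S A = (drGraph Θ S).deleteEdges {s(A, cA)} := by
  rw [empGraph, hA.belowEdges_eq]

theorem empGraph_le (hA : Θ.Below LA A cA)
    (h : (drGraph Θ S').deleteEdges {s(A, cA)} ≤ drGraph Θ S) :
    empGraph Θ S' A ≤ empGraph Θ S A := by
  rw [hA.empGraph_eq, hA.empGraph_eq]
  calc _ = ((drGraph Θ S').deleteEdges {s(A, cA)}).deleteEdges {s(A, cA)} := by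
        rw [deleteEdges_deleteEdges, Set.union_self]
    _ ≤ _ := deleteEdges_mono h

theorem deleteEdges_empGraph_le (hA : Θ.Below LA A cA) {e : Sym2 V}
    (h : (drGraph Θ S).deleteEdges {e} ≤ drGraph Θ S') :
    (empGraph Θ S A).deleteEdges {e} ≤ empGraph Θ S' A := by
  rw [hA.empGraph_eq, hA.empGraph_eq, deleteEdges_deleteEdges, Set.union_comm,
    ← deleteEdges_deleteEdges]
  exact deleteEdges_mono h

theorem mem_empComp_of_adj (hA : Θ.Below LA A cA) (hv : v ∈ empComp Θ S A)
    (h : (drGraph Θ S).Adj v w) (he : s(v, w) ≠ s(A, cA)) : w ∈ empComp Θ S A :=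
  Reachable.trans hv <| Adj.reachable <| by
    rw [hA.empGraph_eq]
    exact (deleteEdges_adj ..).2 ⟨h, he⟩

theorem mem_empire_of_forall_adj (hA : Θ.Below LA A cA) (hv : v ∈ empire Θ A)
    (h : ∀ S, (drGraph Θ S).Adj v w) (he : s(v, w) ≠ s(A, cA)) : w ∈ empire Θ A :=
  Set.mem_iInter.2 fun S => hA.mem_empComp_of_adj (Set.mem_iInter.1 hv S) (h S) he

end Below

end MLLProofStructure

theorem self_mem_empire {Θ : MLLProofStructure V} {A : V} : A ∈ empire Θ A :=
  Set.mem_iInter.2 fun _ => Reachable.refl _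

theorem isPrincipal_iff {Θ : MLLProofStructure V} {A : V} {S : MLLLink V → Bool} :
    IsPrincipal Θ A S ↔ ∀ a b c x y, .par a b c ∈ Θ.links → (x = a ∧ y = b ∨ x = b ∧ y = a) →
      A = x ∨ y ∈ empire Θ A ∧ x ∉ empire Θ A → switchEdge S (.par a b c) x c := by
  constructor
  · rintro ⟨h₁, h₂⟩ a b c x y hP (⟨rfl, rfl⟩ | ⟨rfl, rfl⟩) (hA | hx)
    · exact Or.inl ⟨(h₁ _ _ _ hP).1 hA, rfl, rfl⟩
    · exact Or.inl ⟨(h₂ _ _ _ hP).2 hx, rfl, rfl⟩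
    · exact Or.inr ⟨(h₁ _ _ _ hP).2 hA, rfl, rfl⟩
    · exact Or.inr ⟨(h₂ _ _ _ hP).1 hx, rfl, rfl⟩
  · intro h
    refine ⟨fun a b c hP => ⟨fun hA => ?_, fun hA => ?_⟩,
      fun a b c hP => ⟨fun hx => ?_, fun hx => ?_⟩⟩ <;>
    have hab := Θ.par_prems_ne hP (Or.inl ⟨rfl, rfl⟩)
    · simpa [switchEdge, hab] using h a b c a b hP (Or.inl ⟨rfl, rfl⟩) (Or.inl hA)
    · simpa [switchEdge, hab.symm] using h a b c b a hP (Or.inr ⟨rfl, rfl⟩) (Or.inl hA)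
    · simpa [switchEdge, hab.symm] using h a b c b a hP (Or.inr ⟨rfl, rfl⟩) (Or.inr hx)
    · simpa [switchEdge, hab] using h a b c a b hP (Or.inl ⟨rfl, rfl⟩) (Or.inr hx)

open Classical in
noncomputable def principalSwitching (Θ : MLLProofStructure V) (A : V) : MLLLink V → Bool
  | .par a b _ => decide (A = a ∨ b ∈ empire Θ A ∧ a ∉ empire Θ A)
  | _ => true

namespace IsProofNet

variable {Θ : MLLProofStructure V} {S : MLLLink V → Bool} {LA : MLLLink V} {A cA : V}

/-- DR-graphs are simple graphs, so a link from `x` down to `c` and a ⅋-link from `c` down to `x`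
would produce the same edge; in a proof net this cannot happen. -/
theorem not_below_par (hΘ : IsProofNet Θ) {L : MLLLink V} {a b x c : V} (hL : Θ.Below L x c) :
    ¬ Θ.Below (.par a b x) c x := by
  intro hP
  obtain ⟨d, hcd⟩ : ∃ d, c = a ∧ d = b ∨ c = b ∧ d = a := by
    rcases (by simpa [MLLLink.prems] using hP.2.1 : c = a ∨ c = b) with rfl | rfl
    exacts [⟨b, Or.inl ⟨rfl, rfl⟩⟩, ⟨a, Or.inr ⟨rfl, rfl⟩⟩]
  have hdc : d ≠ c := (Θ.par_prems_ne hP.1 hcd).symm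
  have hd : Θ.Below (.par a b x) d x := Θ.below_par hP.1 (by tauto)
  have hLP : L ≠ .par a b x := by
    rintro rfl
    exact (show Θ.Below _ x x from ⟨hP.1, hL.2.1, hP.2.2⟩).ne rfl
  -- `S₁` uses the edges `x — c` of `L` and `d — x` of the ⅋-link; `S₂` switches the latter
  -- to `c — x`, an edge `S₁` already has, so `DR(S₂)` misses the edge `d — x` of the tree `DR(S₁)`.
  obtain ⟨v₁, h₁⟩ := exists_switchEdge_update hL.2.1 hL.2.2 (fun _ => true)
  obtain ⟨v₂, h₂⟩ := exists_switchEdge_update hd.2.1 hd.2.2 (Function.update (fun _ => true) L v₁)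
  set S₁ := Function.update (Function.update (fun _ => true) L v₁) (.par a b x) v₂
  have h₁' : switchEdge S₁ L x c := by
    rwa [switchEdge_congr fun _ => Function.update_of_ne hLP _ _]
  obtain ⟨v₃, h₃⟩ := exists_switchEdge_update hP.2.1 hP.2.2 S₁
  set S₂ := Function.update S₁ (.par a b x) v₃
  have hle : drGraph Θ S₂ ≤ (drGraph Θ S₁).deleteEdges {s(d, x)} := by
    intro u w huw
    refine (deleteEdges_adj ..).2 ⟨?_, fun he => ?_⟩
    · by_cases he : s(u, w) = s(c, x)
      · rw [← mem_edgeSet, he, Sym2.eq_swap, mem_edgeSet]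
        exact drGraph_adj_of_switchEdge hL.1 hL.ne h₁'
      · exact drGraph_deleteEdges_le (fun M hM => Function.update_of_ne hM _ _)
          (fun _ _ h => switchEdge_par_unique h₃ h) ((deleteEdges_adj ..).2 ⟨huw, he⟩)
    · have hdx : (drGraph Θ S₂).Adj d x := by
        rw [← mem_edgeSet, ← Set.mem_singleton_iff.1 he, mem_edgeSet]
        exact huw
      rcases hd.switchEdge_or_below_of_adj hdx with h | ⟨M, hM⟩
      · exact hdc (switchEdge_par_unique h₃ h).1
      · exact hdc (hL.unique hM).2.symm
  exact (hΘ S₁).1.not_reachable_deleteEdges (drGraph_adj_of_switchEdge hP.1 hd.ne h₂)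
    (((hΘ _).2.preconnected d x).mono hle)

theorem drGraph_adj_iff_switchEdge_par (hΘ : IsProofNet Θ) {a b c x : V}
    (hx : Θ.Below (.par a b c) x c) :
    (drGraph Θ S).Adj x c ↔ switchEdge S (.par a b c) x c :=
  ⟨fun h => (hx.switchEdge_or_below_of_adj h).resolve_right fun ⟨_, hM⟩ => hΘ.not_below_par hM hx,
    drGraph_adj_of_switchEdge hx.1 hx.ne⟩

theorem sym2_ne_of_below_par (hΘ : IsProofNet Θ) (hA : Θ.Below LA A cA) {a b c p : V}
    (hp : Θ.Below (.par a b c) p c) (hpA : p ≠ A) : s(p, c) ≠ s(A, cA) := by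
  rw [Ne, Sym2.eq_iff]
  rintro (⟨rfl, -⟩ | ⟨rfl, rfl⟩)
  · exact hpA rfl
  · exact hΘ.not_below_par hA hp

theorem empComp_eq_univ (hΘ : IsProofNet Θ)
    (h : Disjoint (drGraph Θ S).edgeSet (belowEdges Θ A)) : empComp Θ S A = Set.univ := by
  refine Set.eq_univ_of_forall fun v => ?_
  show (empGraph Θ S A).Reachable A v
  rw [empGraph, deleteEdges_eq_self.2 h]
  exact (hΘ S).2.preconnected A v

theorem concl_notMem_empComp (hΘ : IsProofNet Θ) (hA : Θ.Below LA A cA)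
    (h : (drGraph Θ S).Adj A cA) : cA ∉ empComp Θ S A := by
  show ¬ (empGraph Θ S A).Reachable A cA
  rw [hA.empGraph_eq]
  exact (hΘ S).1.not_reachable_deleteEdges h

theorem adj_of_notMem_empComp (hΘ : IsProofNet Θ) (hA : Θ.Below LA A cA) {v : V}
    (hv : v ∉ empComp Θ S A) : (drGraph Θ S).Adj A cA := by
  by_contra h
  refine hv ((hΘ.empComp_eq_univ ?_).symm ▸ Set.mem_univ v)
  rwa [hA.belowEdges_eq, Set.disjoint_singleton_right, mem_edgeSet]

theorem mem_empComp_or_reachable_concl (hΘ : IsProofNet Θ) (hA : Θ.Below LA A cA) (v : V) :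
    v ∈ empComp Θ S A ∨ (empGraph Θ S A).Reachable cA v := by
  show (empGraph Θ S A).Reachable A v ∨ _
  rw [hA.empGraph_eq]
  rcases ((hΘ S).2.preconnected v A).deleteEdges_singleton_or A cA with h | h | h
  exacts [Or.inl h.symm, Or.inl h.symm, Or.inr h.symm]

theorem concl_notMem_empire (hΘ : IsProofNet Θ) (hA : Θ.Below LA A cA) : cA ∉ empire Θ A := by
  obtain ⟨v, h⟩ := exists_switchEdge_update hA.2.1 hA.2.2 (fun _ => true)
  exact fun hc => hΘ.concl_notMem_empComp hA (drGraph_adj_of_switchEdge hA.1 hA.ne h)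
    (Set.mem_iInter.1 hc _)

theorem mem_empire_of_par (hΘ : IsProofNet Θ) {a b c y : V} (hP : .par a b c ∈ Θ.links)
    (hAy : A = a ∧ y = b ∨ A = b ∧ y = a) : y ∈ empire Θ A := by
  have hA : Θ.Below (.par a b c) A c := Θ.below_par hP (by tauto)
  have hy : Θ.Below (.par a b c) y c := Θ.below_par hP (by tauto)
  have hyA : y ≠ A := (Θ.par_prems_ne hP hAy).symm
  refine Set.mem_iInter.2 fun S => ?_
  obtain ⟨vA, hSA⟩ := exists_switchEdge_update hA.2.1 hA.2.2 S
  obtain ⟨vy, hSy⟩ := exists_switchEdge_update hy.2.1 hy.2.2 S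
  set SA := Function.update S (.par a b c) vA
  set Sy := Function.update S (.par a b c) vy
  have hAc : (drGraph Θ SA).Adj A c := drGraph_adj_of_switchEdge hP hA.ne hSA
  -- `DR(S_y)` trades the edge `A — c` of `DR(S_A)` for `y — c` and still joins `A` to `c`,
  -- so `y` lies on the side of `A`.
  have hle : (drGraph Θ Sy).deleteEdges {s(y, c)} ≤ empGraph Θ SA A := by
    intro u w huw
    rw [hA.empGraph_eq]
    refine (deleteEdges_adj ..).2 ⟨drGraph_deleteEdges_le
      (fun M hM => by simp only [SA, Sy, Function.update_of_ne hM])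
      (fun _ _ h => switchEdge_par_unique hSy h) huw, fun he => hyA ?_⟩
    have hAc' : (drGraph Θ Sy).Adj A c := by
      rw [← mem_edgeSet, ← Set.mem_singleton_iff.1 he, mem_edgeSet]
      exact ((deleteEdges_adj ..).1 huw).1
    exact (switchEdge_par_unique hSy ((hΘ.drGraph_adj_iff_switchEdge_par hA).1 hAc')).1.symm
  have hySA : y ∈ empComp Θ SA A := by
    rcases ((hΘ Sy).2.preconnected A c).deleteEdges_singleton_or y c with h | h | h
    · exact absurd (h.mono hle) (hΘ.concl_notMem_empComp hA hAc)
    · exact h.mono hle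
    · exact absurd (h.mono hle) (hΘ.concl_notMem_empComp hA hAc)
  exact hySA.mono <| hA.empGraph_le <| drGraph_deleteEdges_le
    (fun M hM => Function.update_of_ne hM _ _) (fun _ _ h => switchEdge_par_unique hSA h)

theorem mem_empire_of_below (hΘ : IsProofNet Θ) (hA : Θ.Below LA A cA) {L : MLLLink V}
    {x c : V} (hL : Θ.Below L x c) (hc : c ∈ empire Θ A) (he : s(x, c) ≠ s(A, cA)) :
    x ∈ empire Θ A := by
  refine Set.mem_iInter.2 fun S => ?_
  have hcS : c ∈ empComp Θ S A := Set.mem_iInter.1 hc S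
  have he' : s(c, x) ≠ s(A, cA) := by rwa [Sym2.eq_swap]
  obtain hxc | ⟨a, b, y, rfl, hxy, hSy⟩ := switchEdge_or_par hL.2.1 hL.2.2 S
  · exact hA.mem_empComp_of_adj hcS (drGraph_adj_of_switchEdge hL.1 hL.ne hxc).symm he'
  have hy : Θ.Below (.par a b c) y c := Θ.below_par hL.1 (by tauto)
  have hyA : y ≠ A := by
    rintro rfl
    refine hΘ.concl_notMem_empire hA ?_
    rwa [(hA.unique hy).2]
  have hyc : s(y, c) ≠ s(A, cA) := hΘ.sym2_ne_of_below_par hA hy hyA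
  have hyS : y ∈ empComp Θ S A :=
    hA.mem_empComp_of_adj hcS (drGraph_adj_of_switchEdge hL.1 hy.ne hSy).symm
      (by rwa [Sym2.eq_swap])
  by_contra hxS
  have hAcA : (drGraph Θ S).Adj A cA := hΘ.adj_of_notMem_empComp hA hxS
  -- switch the ⅋-link to `x`: `A — cA` survives and `x` joins the side of `A`
  obtain ⟨v, hSx⟩ := exists_switchEdge_update hL.2.1 hL.2.2 S
  set Sx := Function.update S (.par a b c) v
  have hle : (drGraph Θ S).deleteEdges {s(y, c)} ≤ drGraph Θ Sx :=
    drGraph_deleteEdges_le (fun M hM => (Function.update_of_ne hM _ _).symm)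
      (fun _ _ h => switchEdge_par_unique hSy h)
  have hAcAx : (drGraph Θ Sx).Adj A cA :=
    hle ((deleteEdges_adj ..).2 ⟨hAcA, fun h => hyc (Set.mem_singleton_iff.1 h).symm⟩)
  have hxSx : x ∈ empComp Θ Sx A :=
    hA.mem_empComp_of_adj (Set.mem_iInter.1 hc Sx)
      (drGraph_adj_of_switchEdge hL.1 hL.ne hSx).symm he'
  rcases ((hΘ.mem_empComp_or_reachable_concl hA x).resolve_left hxS).deleteEdges_singleton_or y c
    with h | h | h
  · exact hΘ.concl_notMem_empComp hA hAcAx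
      (hxSx.trans (h.mono (hA.deleteEdges_empGraph_le hle)).symm)
  · exact hΘ.concl_notMem_empComp hA hAcA (hyS.trans (h.mono (deleteEdges_le _)).symm)
  · exact hΘ.concl_notMem_empComp hA hAcA (hcS.trans (h.mono (deleteEdges_le _)).symm)

theorem isPrincipal_principalSwitching (hΘ : IsProofNet Θ) :
    IsPrincipal Θ A (principalSwitching Θ A) := by
  refine isPrincipal_iff.2 fun a b c x y hP hxy hx => ?_
  have hab := Θ.par_prems_ne hP (Or.inl ⟨rfl, rfl⟩)
  rcases hxy with ⟨rfl, rfl⟩ | ⟨rfl, rfl⟩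
  · exact Or.inl ⟨by simpa [principalSwitching] using hx, rfl, rfl⟩
  · refine Or.inr ⟨?_, rfl, rfl⟩
    simp only [principalSwitching, decide_eq_false_iff_not, not_or, not_and, not_not]
    rcases hx with rfl | ⟨hy, hx⟩
    · exact ⟨hab.symm, fun _ => hΘ.mem_empire_of_par hP (Or.inr ⟨rfl, rfl⟩)⟩
    · exact ⟨fun h => hx (hΘ.mem_empire_of_par hP (Or.inl ⟨h, rfl⟩)), fun _ => hy⟩

theorem isPrincipal_of_empComp_eq_empire (hΘ : IsProofNet Θ) (hA : Θ.Below LA A cA)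
    (h : empComp Θ S A = empire Θ A) : IsPrincipal Θ A S := by
  refine isPrincipal_iff.2 fun a b c x y hP hxy hx => ?_
  by_contra hSx
  have hSy := (switchEdge_par_or hxy S).resolve_left hSx
  have hxP : Θ.Below (.par a b c) x c := Θ.below_par hP (by tauto)
  have hyP : Θ.Below (.par a b c) y c := Θ.below_par hP (by tauto)
  have hc : y ∈ empire Θ A → y ≠ A → c ∈ empire Θ A := fun hy hyA => by
    rw [← h] at hy ⊢
    exact hA.mem_empComp_of_adj hy (drGraph_adj_of_switchEdge hP hyP.ne hSy)
      (hΘ.sym2_ne_of_below_par hA hyP hyA)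
  rcases hx with rfl | ⟨hy, hx⟩
  · refine hΘ.concl_notMem_empire hA ?_
    rw [(hA.unique hxP).2]
    exact hc (hΘ.mem_empire_of_par hP hxy) (Θ.par_prems_ne hP hxy).symm
  · have hyA : y ≠ A := fun hyA => hx (hΘ.mem_empire_of_par hP (by subst hyA; tauto))
    have hxA : x ≠ A := fun hxA => hx (hxA ▸ self_mem_empire)
    exact hx (hΘ.mem_empire_of_below hA hxP (hc hy hyA) (hΘ.sym2_ne_of_below_par hA hxP hxA))

theorem concl_mem_empire_of_isPrincipal (hΘ : IsProofNet Θ) (hA : Θ.Below LA A cA)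
    (hS : IsPrincipal Θ A S) {L : MLLLink V} {x c : V} (hL : Θ.Below L x c)
    (hsw : switchEdge S L x c) (hx : x ∈ empire Θ A) (he : s(x, c) ≠ s(A, cA)) :
    c ∈ empire Θ A := by
  refine Set.mem_iInter.2 fun S₁ => ?_
  obtain h | ⟨a, b, y, rfl, hxy, hy⟩ := switchEdge_or_par hL.2.1 hL.2.2 S₁
  · exact hA.mem_empComp_of_adj (Set.mem_iInter.1 hx S₁) (drGraph_adj_of_switchEdge hL.1 hL.ne h) he
  have hyx : y = a ∧ x = b ∨ y = b ∧ x = a := by tauto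
  have hSy : ¬ switchEdge S (.par a b c) y c := fun h =>
    Θ.par_prems_ne hL.1 hxy (switchEdge_par_unique hsw h).1.symm
  have hyA : y ≠ A := fun h => hSy (isPrincipal_iff.1 hS a b c y x hL.1 hyx (Or.inl h.symm))
  have hyE : y ∈ empire Θ A := by
    by_contra h
    exact hSy (isPrincipal_iff.1 hS a b c y x hL.1 hyx (Or.inr ⟨hx, h⟩))
  have hyL : Θ.Below (.par a b c) y c := Θ.below_par hL.1 (by tauto)
  exact hA.mem_empComp_of_adj (Set.mem_iInter.1 hyE S₁) (drGraph_adj_of_switchEdge hL.1 hyL.ne hy)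
    (hΘ.sym2_ne_of_below_par hA hyL hyA)

theorem mem_empire_of_empGraph_adj (hΘ : IsProofNet Θ) (hA : Θ.Below LA A cA)
    (hS : IsPrincipal Θ A S) {w w' : V} (hw : w ∈ empire Θ A) (h : (empGraph Θ S A).Adj w w') :
    w' ∈ empire Θ A := by
  rw [hA.empGraph_eq, deleteEdges_adj, Set.mem_singleton_iff] at h
  obtain ⟨hadj, he⟩ := h
  obtain ⟨hne, ⟨M, hM, hsw⟩ | ⟨M, hM, hsw⟩⟩ := (fromRel_adj ..).1 hadj
  · rcases switchEdge_mem hsw with rfl | ⟨hwM, hw'M⟩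
    · exact hA.mem_empire_of_forall_adj hw
        (fun S₁ => drGraph_adj_of_switchEdge (S := S₁) hM hne hsw) he
    · exact hΘ.concl_mem_empire_of_isPrincipal hA hS ⟨hM, hwM, hw'M⟩ hsw hw he
  · rcases switchEdge_mem hsw with rfl | ⟨hw'M, hwM⟩
    · exact hA.mem_empire_of_forall_adj hw
        (fun S₁ => (drGraph_adj_of_switchEdge (S := S₁) hM hne.symm hsw).symm) he
    · exact hΘ.mem_empire_of_below hA ⟨hM, hw'M, hwM⟩ hw (by rwa [Sym2.eq_swap])

theorem empComp_subset_empire (hΘ : IsProofNet Θ) (hA : Θ.Below LA A cA)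
    (hS : IsPrincipal Θ A S) : empComp Θ S A ⊆ empire Θ A := by
  intro v hv
  replace hv := (reachable_iff_reflTransGen _ _).1 hv
  induction hv with
  | refl => exact self_mem_empire
  | tail _ hadj ih => exact hΘ.mem_empire_of_empGraph_adj hA hS ih hadj

theorem empComp_eq_univ_of_isConclusion (hΘ : IsProofNet Θ) (hA : IsConclusion Θ A)
    (S : MLLLink V → Bool) : empComp Θ S A = Set.univ := by
  refine hΘ.empComp_eq_univ (Set.disjoint_right.2 ?_)
  rintro _ ⟨L, hL, hAL, -⟩
  exact absurd hAL (hA L hL)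

theorem empire_eq_univ_of_isConclusion (hΘ : IsProofNet Θ) (hA : IsConclusion Θ A) :
    empire Θ A = Set.univ :=
  Set.iInter_eq_univ.2 (hΘ.empComp_eq_univ_of_isConclusion hA)

theorem isPrincipal_of_isConclusion (hΘ : IsProofNet Θ) (hA : IsConclusion Θ A)
    (S : MLLLink V → Bool) : IsPrincipal Θ A S := by
  refine isPrincipal_iff.2 fun a b c x y hP hxy hx => ?_
  rcases hx with rfl | ⟨-, hx⟩
  · exact absurd (Θ.below_par hP (by tauto)).2.1 (hA _ hP)
  · exact absurd (hΘ.empire_eq_univ_of_isConclusion hA ▸ Set.mem_univ x) hx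

end IsProofNet

/-- There is a switching whose component `Θ_S^A` has vertex set exactly the
empire of `A`; moreover a switching has this property iff it is principal for `A`. -/
theorem principal_switching (Θ : MLLProofStructure V) (hΘ : IsProofNet Θ) (A : V) :
    (∃ S : MLLLink V → Bool, empComp Θ S A = empire Θ A) ∧
    (∀ S : MLLLink V → Bool, empComp Θ S A = empire Θ A ↔ IsPrincipal Θ A S) := by
  by_cases hA : IsConclusion Θ A
  · have hcomp : ∀ S, empComp Θ S A = empire Θ A := fun S => by
      rw [hΘ.empComp_eq_univ_of_isConclusion hA, hΘ.empire_eq_univ_of_isConclusion hA]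
    exact ⟨⟨fun _ => true, hcomp _⟩,
      fun S => iff_of_true (hcomp S) (hΘ.isPrincipal_of_isConclusion hA S)⟩
  obtain ⟨L, hL, hAL⟩ : ∃ L ∈ Θ.links, A ∈ L.prems := by simpa [IsConclusion] using hA
  obtain ⟨c, hc⟩ := MLLLink.exists_concls_eq_of_mem_prems hAL
  have hAc : Θ.Below L A c := ⟨hL, hAL, by simp [hc]⟩
  have key : ∀ S, empComp Θ S A = empire Θ A ↔ IsPrincipal Θ A S := fun S =>
    ⟨hΘ.isPrincipal_of_empComp_eq_empire hAc,
      fun hS => (hΘ.empComp_subset_empire hAc hS).antisymm (Set.iInter_subset _ S)⟩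
  exact ⟨⟨_, (key _).2 hΘ.isPrincipal_principalSwitching⟩, key⟩
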